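/- For every x ∈ X the set P_x(f) is a closed sub-semigroup of G (closed in G and closed under multiplication), and the set E_x(f) is closed and symmetric, i.e. E_x(f)^{-1} = E_x(f). Consequently, for every x with E_x(f) = P_x(f) (i.e. x ∈ 𝒟(f)), E_x(f) is a closed subgroup of G. -/

import Mathlib

open Topology Pointwise Set Filter

section Defs

variable {X : Type*} [TopologicalSpace X] {G : Type*} [TopologicalSpace G] [Group G]

/-- The positive-iterate part of the cocycle generated by `f` over `T`:
`f(n,x) = f(T^{n-1}x) ⋯ f(Tx) · f(x)` for `n ≥ 1` and `f(0,x) = e`. -/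
def cocycleNat (T : X ≃ₜ X) (f : X → G) : ℕ → X → G
  | 0, _ => 1
  | n + 1, x => f ((T.toEquiv ^ n) x) * cocycleNat T f n x

/-- The cocycle generated by `f` over `T`, at integer times:
`f(n,x)` as above for `n ≥ 0` and `f(n,x) = f(-n, T^n x)⁻¹` for `n < 0`. -/
def cocycle (T : X ≃ₜ X) (f : X → G) (n : ℤ) (x : X) : G :=
  if 0 ≤ n then cocycleNat T f n.toNat x
  else (cocycleNat T f (-n).toNat ((T.toEquiv ^ n) x))⁻¹

/-- The `n`-th power of the skew product `T_f` on `X × G`: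
`T_f^n (x,g) = (T^n x, f(n,x)·g)`. -/
def skewPow (T : X ≃ₜ X) (f : X → G) (n : ℤ) (p : X × G) : X × G :=
  ((T.toEquiv ^ n) p.1, cocycle T f n p.1 * p.2)

/-- The `n`-th power of the skew product `T_f` acting on `X × G/H`:
`T_f^n (x, gH) = (T^n x, f(n,x)·gH)`. -/
def skewPowQ (T : X ≃ₜ X) (f : X → G) (H : Subgroup G) (n : ℤ) (p : X × (G ⧸ H)) :
    X × (G ⧸ H) :=
  ((T.toEquiv ^ n) p.1, cocycle T f n p.1 • p.2)

/-- The local essential range `E_x(f)`: all `g ∈ G` such that for every open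
neighbourhood `U` of `x` and every open neighbourhood `V` of the identity there are
`n ∈ ℤ` and `y ∈ U ∩ T⁻ⁿU` with `f(n,y) ∈ V·g`. -/
def essRange (T : X ≃ₜ X) (f : X → G) (x : X) : Set G :=
  {g | ∀ U : Set X, IsOpen U → x ∈ U → ∀ V : Set G, IsOpen V → (1 : G) ∈ V →
    ∃ n : ℤ, ∃ y ∈ U, (T.toEquiv ^ n) y ∈ U ∧ ∃ v ∈ V, cocycle T f n y = v * g}

/-- `P_x(f)`: the vertical section at `x` of the closure of the `T_f`-orbit of `(x,e)`. -/
def Pset (T : X ≃ₜ X) (f : X → G) (x : X) : Set G :=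
  {g | (x, g) ∈ closure (Set.range fun n : ℤ => skewPow T f n (x, 1))}

/-- `𝒟(f) = {x : E_x(f) = P_x(f)}`. -/
def Dset (T : X ≃ₜ X) (f : X → G) : Set X :=
  {x | essRange T f x = Pset T f x}

/-- Topological recurrence of the cocycle generated by `f`: for every open
neighbourhood `V` of the identity of `G` and every nonempty open `U ⊆ X` there is
`n ≠ 0` with `T⁻ⁿU ∩ U ∩ {x : f(n,x) ∈ V} ≠ ∅`. -/
def IsRecurrentCocycle (T : X ≃ₜ X) (f : X → G) : Prop :=
  ∀ V : Set G, IsOpen V → (1 : G) ∈ V → ∀ U : Set X, IsOpen U → U.Nonempty →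
    ∃ n : ℤ, n ≠ 0 ∧ ∃ x ∈ U, (T.toEquiv ^ n) x ∈ U ∧ cocycle T f n x ∈ V

/-- Minimality of a homeomorphism: every orbit is dense. -/
def IsMinimal (T : X ≃ₜ X) : Prop :=
  ∀ x : X, Dense (Set.range fun n : ℤ => (T.toEquiv ^ n) x)

/-- A consistent selection of subgroups for the cocycle generated by `f`: a family of
closed subgroups `H x ⊆ E_x(f)` with `H (Tⁿx) = f(n,x)·(H x)·f(n,x)⁻¹` depending
continuously on `x` for the Fell topology. -/
structure IsConsistentSelection (T : X ≃ₜ X) (f : X → G) (H : X → Subgroup G) : Prop where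
  isClosed : ∀ x : X, IsClosed (H x : Set G)
  subset_essRange : ∀ x : X, (H x : Set G) ⊆ essRange T f x
  conj : ∀ (x : X) (n : ℤ), (H ((T.toEquiv ^ n) x) : Set G) =
    (fun h => cocycle T f n x * h * (cocycle T f n x)⁻¹) '' (H x : Set G)
  fell_compact : ∀ (x : X) (K : Set G), IsCompact K → K ∩ (H x : Set G) = ∅ →
    ∃ W ∈ 𝓝 x, ∀ y ∈ W, K ∩ (H y : Set G) = ∅
  fell_open : ∀ (x : X) (O : Set G), IsOpen O → (O ∩ (H x : Set G)).Nonempty →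
    ∃ W ∈ 𝓝 x, ∀ y ∈ W, (O ∩ (H y : Set G)).Nonempty

/-- The `T_f`-orbit closure of a point of `X × G`. -/
def orbitClosure (T : X ≃ₜ X) (f : X → G) (p : X × G) : Set (X × G) :=
  closure (Set.range fun n : ℤ => skewPow T f n p)

/-- For `C ⊆ X × G`, the set `H = {g : C·g⁻¹ = C}`, where `C·g = {(y, c·g) : (y,c) ∈ C}`. -/
def stabSet (C : Set (X × G)) : Set G :=
  {g : G | (fun p : X × G => (p.1, p.2 * g⁻¹)) '' C = C}

/-- A strongly regular orbit closure: a `T_f`-orbit closure which projects onto all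
of `X` and all of whose vertical sections are single left cosets of
`H = {g : C·g⁻¹ = C}`. -/
def IsStronglyRegularOC (T : X ≃ₜ X) (f : X → G) (C : Set (X × G)) : Prop :=
  (∃ p : X × G, C = orbitClosure T f p) ∧ Prod.fst '' C = Set.univ ∧
    ∀ x : X, ∃ gx : G, {g : G | (x, g) ∈ C} = {gx} * stabSet C

/-- A strongly regular cocycle: one whose skew product admits a strongly regular
orbit closure. -/
def IsStronglyRegularCocycle (T : X ≃ₜ X) (f : X → G) : Prop :=
  ∃ C : Set (X × G), IsStronglyRegularOC T f C

/-- A regular cocycle: some `T_f`-orbit closure projects onto all of `X`. -/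
def IsRegularCocycle (T : X ≃ₜ X) (f : X → G) : Prop :=
  ∃ p : X × G, Prod.fst '' orbitClosure T f p = Set.univ

end Defs

/-!
The orbit closure `C` of `(x, e)` is invariant under every `T_f^n`, and right translation by
`h ∈ G` commutes with `T_f`; so if `(x, h) ∈ C`, right translation by `h` maps the orbit of
`(x, e)`, hence `C`, into `C`. This makes `P_x(f)`, the section of `C` at `x`, a closed
semigroup. `E_x(f)` is closed by an `ε/2`-argument in `G`, and symmetric because
`f(-n, Tⁿy) = f(n, y)⁻¹` with `y` and `Tⁿy` both in `U`. When the two sets agree, they contain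
`e = f(0, x)` and are closed under products and inverses.
-/

section Cocycle

variable {X : Type*} {G : Type*} [Group G]

theorem Homeomorph.toEquiv_zpow [TopologicalSpace X] (T : X ≃ₜ X) (n : ℤ) :
    T.toEquiv ^ n = (T ^ n).toEquiv :=
  (map_zpow (⟨⟨Homeomorph.toEquiv, rfl⟩, fun _ _ => rfl⟩ : (X ≃ₜ X) →* Equiv.Perm X) T n).symm

theorem Homeomorph.continuous_toEquiv_zpow [TopologicalSpace X] (T : X ≃ₜ X) (n : ℤ) :
    Continuous ⇑(T.toEquiv ^ n) := by
  rw [T.toEquiv_zpow]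
  exact (T ^ n).continuous

variable [TopologicalSpace X] (T : X ≃ₜ X) (f : X → G)

theorem cocycleNat_add (m n : ℕ) (x : X) :
    cocycleNat T f (m + n) x = cocycleNat T f m ((T.toEquiv ^ n) x) * cocycleNat T f n x := by
  induction m with
  | zero => simp [cocycleNat]
  | succ m ih =>
    rw [Nat.add_right_comm, cocycleNat, ih, cocycleNat, pow_add, Equiv.Perm.mul_apply, mul_assoc]

theorem cocycle_zpow_natCast_eq {n : ℤ} {j k : ℕ} (h : n + k = j) (y : X) :
    cocycle T f n ((T.toEquiv ^ (k : ℤ)) y) = cocycleNat T f j y * (cocycleNat T f k y)⁻¹ := by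
  rw [zpow_natCast]
  by_cases hn : 0 ≤ n
  · obtain ⟨i, rfl⟩ := Int.eq_ofNat_of_zero_le hn
    rw [show j = i + k by omega, cocycleNat_add, cocycle, if_pos hn, Int.toNat_natCast,
      mul_inv_cancel_right]
  · obtain ⟨i, rfl⟩ := Int.exists_eq_neg_ofNat (le_of_not_ge hn)
    obtain rfl : k = i + j := by omega
    have hTy : (T.toEquiv ^ (-(i : ℤ))) ((T.toEquiv ^ (i + j)) y) = (T.toEquiv ^ j) y := by
      rw [pow_add, Equiv.Perm.mul_apply, ← zpow_natCast, ← Equiv.Perm.mul_apply, ← zpow_add,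
        neg_add_cancel, zpow_zero, Equiv.Perm.one_apply]
    rw [cocycleNat_add, cocycle, if_neg hn, neg_neg, Int.toNat_natCast, hTy, mul_inv_rev,
      mul_inv_cancel_left]

-- Pull everything back to `y = T⁻ᵏx` with `k` so large that all three cocycles become
-- quotients of positive cocycles at `y`, which then telescope.
theorem cocycle_add (m n : ℤ) (x : X) :
    cocycle T f (m + n) x = cocycle T f m ((T.toEquiv ^ n) x) * cocycle T f n x := by
  obtain ⟨k, hnk, hmnk⟩ : ∃ k : ℕ, 0 ≤ n + k ∧ 0 ≤ m + n + k :=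
    ⟨n.natAbs + (m + n).natAbs, by omega, by omega⟩
  obtain ⟨i, hi⟩ := Int.eq_ofNat_of_zero_le hnk
  obtain ⟨j, hj⟩ := Int.eq_ofNat_of_zero_le hmnk
  set y := (T.toEquiv ^ (-(k : ℤ))) x
  have hx : x = (T.toEquiv ^ (k : ℤ)) y := by simp [y]
  have hTnx : (T.toEquiv ^ n) x = (T.toEquiv ^ (i : ℤ)) y := by
    rw [hx, ← Equiv.Perm.mul_apply, ← zpow_add, ← hi]
  rw [hTnx, hx, cocycle_zpow_natCast_eq T f (by omega : m + n + k = j),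
    cocycle_zpow_natCast_eq T f (by omega : m + i = j),
    cocycle_zpow_natCast_eq T f (by omega : n + k = i)]
  group

theorem cocycle_zero (x : X) : cocycle T f 0 x = 1 := rfl

theorem cocycle_neg (n : ℤ) (x : X) :
    cocycle T f (-n) ((T.toEquiv ^ n) x) = (cocycle T f n x)⁻¹ := by
  rw [eq_inv_iff_mul_eq_one, ← cocycle_add, neg_add_cancel, cocycle_zero]

theorem skewPow_add (m n : ℤ) (p : X × G) :
    skewPow T f m (skewPow T f n p) = skewPow T f (m + n) p := by
  simp only [skewPow, zpow_add, Equiv.Perm.mul_apply, cocycle_add, mul_assoc]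

variable [TopologicalSpace G] [IsTopologicalGroup G] {f}

theorem continuous_cocycleNat (hf : Continuous f) (n : ℕ) : Continuous (cocycleNat T f n) := by
  induction n with
  | zero => exact continuous_const
  | succ n ih =>
    have hTn := T.continuous_toEquiv_zpow n
    rw [zpow_natCast] at hTn
    exact (hf.comp hTn).mul ih

theorem continuous_cocycle (hf : Continuous f) (n : ℤ) : Continuous (cocycle T f n) := by
  unfold cocycle
  split_ifs
  · exact continuous_cocycleNat T hf _
  · exact ((continuous_cocycleNat T hf _).comp (T.continuous_toEquiv_zpow n)).inv

theorem continuous_skewPow (hf : Continuous f) (n : ℤ) : Continuous (skewPow T f n) :=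
  ((T.continuous_toEquiv_zpow n).comp continuous_fst).prodMk
    (((continuous_cocycle T hf n).comp continuous_fst).mul continuous_snd)

end Cocycle

section OrbitClosure

variable {X : Type*} [TopologicalSpace X] {G : Type*} [TopologicalSpace G] [Group G]
  (T : X ≃ₜ X) (f : X → G)

theorem isClosed_Pset (x : X) : IsClosed (Pset T f x) :=
  isClosed_closure.preimage (by fun_prop)

theorem one_mem_Pset (x : X) : (1 : G) ∈ Pset T f x :=
  subset_closure ⟨0, by simp [skewPow, cocycle_zero]⟩

variable [IsTopologicalGroup G] {f}

theorem mapsTo_skewPow_orbitClosure (hf : Continuous f) (n : ℤ) (p : X × G) :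
    MapsTo (skewPow T f n) (orbitClosure T f p) (orbitClosure T f p) := by
  refine MapsTo.closure ?_ (continuous_skewPow T hf n)
  rintro _ ⟨m, rfl⟩
  exact ⟨n + m, (skewPow_add T f n m p).symm⟩

theorem mul_mem_Pset (hf : Continuous f) {x : X} {g h : G} (hg : g ∈ Pset T f x)
    (hh : h ∈ Pset T f x) : g * h ∈ Pset T f x := by
  -- right translation by `h` carries `T_f^m (x, e)` to `T_f^m (x, h)`
  have hR : MapsTo (fun p : X × G => (p.1, p.2 * h)) (orbitClosure T f (x, 1))
      (orbitClosure T f (x, 1)) := by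
    refine MapsTo.closure_left ?_ (by fun_prop) isClosed_closure
    rintro _ ⟨m, rfl⟩
    simpa [skewPow] using mapsTo_skewPow_orbitClosure T hf m (x, 1) hh
  exact hR hg

end OrbitClosure

section EssentialRange

variable {X : Type*} [TopologicalSpace X] {G : Type*} [TopologicalSpace G] [Group G]
  (T : X ≃ₜ X) (f : X → G)

theorem isClosed_essRange [ContinuousMul G] (x : X) : IsClosed (essRange T f x) := by
  refine isClosed_of_closure_subset fun g hg U hU hxU V hV h1V => ?_
  obtain ⟨W, hW, h1W, hWV⟩ := exists_open_nhds_one_mul_subset (hV.mem_nhds h1V)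
  obtain ⟨_, ⟨w, hw, _, rfl, rfl⟩, hwg⟩ :=
    mem_closure_iff.mp hg (W * {g}) hW.mul_right ⟨1, h1W, g, rfl, one_mul g⟩
  obtain ⟨n, y, hyU, hTyU, v, hv, hc⟩ := hwg U hU hxU W hW h1W
  exact ⟨n, y, hyU, hTyU, v * w, hWV (mul_mem_mul hv hw), by rw [hc, mul_assoc]⟩

variable [IsTopologicalGroup G]

theorem inv_mem_essRange {x : X} {g : G} (hg : g ∈ essRange T f x) :
    g⁻¹ ∈ essRange T f x := by
  intro U hU hxU V hV h1V
  -- if `f(n,y) = v g`, then `f(-n, Tⁿy) = (g⁻¹ v⁻¹ g) g⁻¹`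
  obtain ⟨n, y, hyU, hTyU, v, hv, hc⟩ := hg U hU hxU ((fun v => g⁻¹ * v⁻¹ * g) ⁻¹' V)
    (hV.preimage (by fun_prop)) (by simpa using h1V)
  refine ⟨-n, _, hTyU, ?_, _, hv, ?_⟩
  · simpa [zpow_neg] using hyU
  · rw [cocycle_neg, hc]
    group

theorem inv_essRange (x : X) : (essRange T f x)⁻¹ = essRange T f x :=
  Subset.antisymm (fun g hg => inv_inv g ▸ inv_mem_essRange T f hg)
    (fun _ hg => inv_mem_essRange T f hg)

theorem exists_subgroup_coe_eq_essRange (hf : Continuous f) {x : X}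
    (hx : x ∈ Dset T f) : ∃ H : Subgroup G, (H : Set G) = essRange T f x :=
  ⟨{ carrier := essRange T f x
     one_mem' := hx ▸ one_mem_Pset T f x
     mul_mem' := by
       rw [hx]
       exact mul_mem_Pset T hf
     inv_mem' := inv_mem_essRange T f }, rfl⟩

end EssentialRange

theorem statement_13_general
    {X : Type*} [TopologicalSpace X]
    {G : Type*} [TopologicalSpace G] [Group G] [IsTopologicalGroup G]
    (T : X ≃ₜ X) (f : X → G) (hf : Continuous f)
    (x : X) :
    IsClosed (Pset T f x) ∧
    (∀ g ∈ Pset T f x, ∀ h ∈ Pset T f x, g * h ∈ Pset T f x) ∧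
    IsClosed (essRange T f x) ∧
    (essRange T f x)⁻¹ = essRange T f x ∧
    (x ∈ Dset T f → ∃ H : Subgroup G, (H : Set G) = essRange T f x) :=
  ⟨isClosed_Pset T f x, fun _ hg _ hh => mul_mem_Pset T hf hg hh, isClosed_essRange T f x,
    inv_essRange T f x, exists_subgroup_coe_eq_essRange T f hf⟩

theorem statement_13
    {X : Type*} [TopologicalSpace X] [CompactSpace X] [TopologicalSpace.MetrizableSpace X]
    {G : Type*} [TopologicalSpace G] [Group G] [IsTopologicalGroup G]
    [LocallyCompactSpace G] [SecondCountableTopology G] [T2Space G]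
    (T : X ≃ₜ X) (hT : IsMinimal T) (f : X → G) (hf : Continuous f)
    (x : X) :
    IsClosed (Pset T f x) ∧
    (∀ g ∈ Pset T f x, ∀ h ∈ Pset T f x, g * h ∈ Pset T f x) ∧
    IsClosed (essRange T f x) ∧
    (essRange T f x)⁻¹ = essRange T f x ∧
    (x ∈ Dset T f → ∃ H : Subgroup G, (H : Set G) = essRange T f x) :=
  statement_13_general T f hf x
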